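/- In the slab setting, let 0 ≤ q₁^w ≤ q₂^w ≤ 1 and let C_w ⊆ C(q₁^w, q₂^w) be a measurable set such that C′ ∩ C(q₁^w, q₂^w) = ∅, q₁ ≥ q₁^w and q₂ ≥ q₂^w. If Pr(X ∈ C′) ≤ Pr(X ∈ C_w), then Pr(Y ∈ C′) ≤ Pr(Y ∈ C_w). -/

import Mathlib

open MeasureTheory ProbabilityTheory Real Filter

/-- The standard normal cumulative distribution function Φ. -/
noncomputable def Phi (t : ℝ) : ℝ := (gaussianReal 0 1 (Set.Iic t)).toReal

/-- The inverse Φ⁻¹ of the standard normal CDF (meaningful on (0,1)). -/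
noncomputable def PhiInv : ℝ → ℝ := Function.invFun Phi

/-- The Gaussian measure N(m, σ²I) on ℝ^d. -/
noncomputable def gaussianVec {d : ℕ} (m : Fin d → ℝ) (σ : ℝ) :
    Measure (Fin d → ℝ) :=
  Measure.pi fun i => gaussianReal (m i) (Real.toNNReal (σ ^ 2))

/-- Dot product on ℝ^d. -/
def dotp {d : ℕ} (a b : Fin d → ℝ) : ℝ := ∑ i, a i * b i

/-- Euclidean (ℓ₂) norm on ℝ^d. -/
noncomputable def l2norm {d : ℕ} (a : Fin d → ℝ) : ℝ := Real.sqrt (∑ i, a i ^ 2)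

/-- Φ⁻¹ extended to EReal with the conventions Φ⁻¹(0) = −∞, Φ⁻¹(1) = +∞. -/
noncomputable def PhiInvE (p : ℝ) : EReal :=
  if p ≤ 0 then ⊥ else if 1 ≤ p then ⊤ else ((PhiInv p : ℝ) : EReal)

/-- Φ extended to EReal with Φ(−∞) = 0 and Φ(+∞) = 1. -/
noncomputable def PhiE (e : EReal) : ℝ :=
  if e = ⊥ then 0 else if e = ⊤ then 1 else Phi e.toReal

/-- The slab C(a,b) = {z : σ‖δ‖₂ Φ⁻¹(1−b) < δᵀ(z−x) ≤ σ‖δ‖₂ Φ⁻¹(1−a)},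
with the conventions Φ⁻¹(0) = −∞ and Φ⁻¹(1) = +∞ (assuming σ‖δ‖₂ > 0, the
defining inequalities are stated for the normalized quantity δᵀ(z−x)/(σ‖δ‖₂)). -/
noncomputable def slab {d : ℕ} (σ : ℝ) (x δ : Fin d → ℝ) (a b : ℝ) :
    Set (Fin d → ℝ) :=
  {z | PhiInvE (1 - b) < ((dotp δ (z - x) / (σ * l2norm δ) : ℝ) : EReal) ∧
      ((dotp δ (z - x) / (σ * l2norm δ) : ℝ) : EReal) ≤ PhiInvE (1 - a)}

open scoped NNReal ENNReal

/-! The likelihood ratio of `N(x + δ, σ²I)` with respect to `N(x, σ²I)` is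
`z ↦ exp ((δᵀ(z - x) - ‖δ‖²/2) / σ²)`, an increasing function of `δᵀ(z - x)`.
Since `Φ⁻¹` is monotone, every point of `C′` lies below the threshold `σ‖δ‖₂ Φ⁻¹(1 - q₂ʷ)`
in direction `δ` and every point of `C_w` above it, so the ratio is at most some constant `c`
on `C′` and at least `c` on `C_w`. Hence
`Pr(Y ∈ C′) ≤ c Pr(X ∈ C′) ≤ c Pr(X ∈ C_w) ≤ Pr(Y ∈ C_w)`. -/

lemma ProbabilityTheory.continuous_cdf (μ : Measure ℝ) [IsProbabilityMeasure μ]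
    [NullSingletonClass μ] :
    Continuous (cdf μ) := by
  refine continuous_iff_continuousAt.2 fun a => ?_
  rw [(monotone_cdf μ).continuousAt_iff_leftLim_eq_rightLim, StieltjesFunction.rightLim_eq]
  have h := (cdf μ).measure_singleton a
  rw [measure_cdf, measure_singleton, eq_comm, ENNReal.ofReal_eq_zero, sub_nonpos] at h
  exact le_antisymm ((monotone_cdf μ).leftLim_le le_rfl) h

lemma Phi_eq_cdf : Phi = cdf (gaussianReal 0 1) := by
  ext t
  rw [cdf_eq_real]
  rfl

lemma Phi_PhiInv {p : ℝ} (h0 : 0 < p) (h1 : p < 1) : Phi (PhiInv p) = p := by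
  have := nullSingletonClass_gaussianReal (μ := 0) one_ne_zero
  obtain ⟨a, ha⟩ := ((tendsto_cdf_atBot (gaussianReal 0 1)).eventually_lt_const h0).exists
  obtain ⟨b, hb⟩ := ((tendsto_cdf_atTop (gaussianReal 0 1)).eventually_const_lt h1).exists
  rw [← Phi_eq_cdf] at ha hb
  exact Function.invFun_eq
    (intermediate_value_univ a b (Phi_eq_cdf ▸ continuous_cdf _) ⟨ha.le, hb.le⟩)

lemma PhiInv_le_PhiInv {p q : ℝ} (hp : 0 < p) (hpq : p ≤ q) (hq : q < 1) :
    PhiInv p ≤ PhiInv q := by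
  by_contra! h
  have hqp := Phi_eq_cdf ▸ monotone_cdf (gaussianReal 0 1) h.le
  rw [Phi_PhiInv (hp.trans_le hpq) hq, Phi_PhiInv hp (hpq.trans_lt hq)] at hqp
  obtain rfl := le_antisymm hpq hqp
  exact h.false

lemma monotone_PhiInvE : Monotone PhiInvE := by
  intro p q hpq
  unfold PhiInvE
  split_ifs <;> first
    | exact bot_le
    | exact le_top
    | exact le_rfl
    | exact EReal.coe_le_coe_iff.2 (PhiInv_le_PhiInv (by linarith) hpq (by linarith))
    | exfalso; linarith

lemma MeasureTheory.withDensity_apply_le_of_forall_le {α : Type*} [MeasurableSpace α]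
    {μ : Measure α} [SFinite μ] {f : α → ℝ≥0∞} (hf : Measurable f) {s t : Set α}
    (hst : ∀ a ∈ s, ∀ b ∈ t, f a ≤ f b) (h : μ s ≤ μ t) :
    μ.withDensity f s ≤ μ.withDensity f t := by
  set c := ⨆ a ∈ s, f a
  calc μ.withDensity f s = ∫⁻ a in s, f a ∂μ := withDensity_apply' f s
    _ ≤ ∫⁻ _ in s, c ∂μ :=
      setLIntegral_mono measurable_const fun a ha => le_iSup₂ (f := fun a _ => f a) a ha
    _ = c * μ s := setLIntegral_const s c
    _ ≤ c * μ t := by gcongr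
    _ = ∫⁻ _ in t, c ∂μ := (setLIntegral_const t c).symm
    _ ≤ ∫⁻ b in t, f b ∂μ :=
      setLIntegral_mono hf fun b hb => iSup₂_le fun a ha => hst a ha b hb
    _ = μ.withDensity f t := (withDensity_apply' f t).symm

lemma Set.indicator_univ_pi_prod {ι : Type*} [Fintype ι] {Ω : ι → Type*}
    (s : ∀ i, Set (Ω i)) (f : ∀ i, Ω i → ℝ≥0∞) (z : ∀ i, Ω i) :
    (Set.univ.pi s).indicator (fun z => ∏ i, f i (z i)) z =
      ∏ i, (s i).indicator (f i) (z i) := by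
  by_cases hz : z ∈ Set.univ.pi s
  · simp [Set.indicator_of_mem hz, Set.indicator_of_mem (hz _ (Set.mem_univ _))]
  · obtain ⟨i, hi⟩ : ∃ i, z i ∉ s i := by simpa [Set.mem_univ_pi] using hz
    rw [Set.indicator_of_notMem hz,
      Finset.prod_eq_zero (Finset.mem_univ i) (Set.indicator_of_notMem hi _)]

section Pi

variable {ι : Type*} [Fintype ι] {Ω : ι → Type*} [∀ i, MeasurableSpace (Ω i)]
  {μ : ∀ i, Measure (Ω i)} [∀ i, IsProbabilityMeasure (μ i)]

lemma MeasureTheory.lintegral_pi_prod_eq_prod_lintegral {f : ∀ i, Ω i → ℝ≥0∞}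
    (hf : ∀ i, Measurable (f i)) :
    ∫⁻ z, ∏ i, f i (z i) ∂Measure.pi μ = ∏ i, ∫⁻ t, f i t ∂μ i := by
  rw [lintegral_prod_eq_prod_lintegral_of_indepFun _ _
    (iIndepFun_pi fun i => (hf i).aemeasurable) fun i => (hf i).comp (measurable_pi_apply i)]
  exact Finset.prod_congr rfl fun i _ => (measurePreserving_eval μ i).lintegral_comp (hf i)

lemma MeasureTheory.Measure.pi_withDensity_ofReal {g : ∀ i, Ω i → ℝ} (hg : ∀ i, Measurable (g i)) :
    Measure.pi (fun i => (μ i).withDensity fun t => ENNReal.ofReal (g i t)) =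
      (Measure.pi μ).withDensity fun z => ∏ i, ENNReal.ofReal (g i (z i)) := by
  refine Measure.pi_eq fun s hs => ?_
  rw [withDensity_apply _ (MeasurableSet.univ_pi hs),
    ← lintegral_indicator (MeasurableSet.univ_pi hs)]
  simp_rw [Set.indicator_univ_pi_prod s fun i t => ENNReal.ofReal (g i t)]
  rw [lintegral_pi_prod_eq_prod_lintegral fun i => (hg i).ennreal_ofReal.indicator (hs i)]
  exact Finset.prod_congr rfl fun i _ => by
    rw [lintegral_indicator (hs i), withDensity_apply _ (hs i)]

end Pi

lemma gaussianReal_add_eq_withDensity (m c : ℝ) {v : ℝ≥0} (hv : v ≠ 0) :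
    gaussianReal (m + c) v = (gaussianReal m v).withDensity
      fun t => ENNReal.ofReal (exp ((c * (t - m) - c ^ 2 / 2) / v)) := by
  rw [gaussianReal_of_var_ne_zero _ hv, gaussianReal_of_var_ne_zero _ hv,
    ← withDensity_mul _ (measurable_gaussianPDF m v) (by fun_prop)]
  congr 1
  funext t
  rw [Pi.mul_apply, gaussianPDF, gaussianPDF,
    ← ENNReal.ofReal_mul (gaussianPDFReal_nonneg m v t)]
  congr 1
  have hv' : (v : ℝ) ≠ 0 := by exact_mod_cast hv
  have hexp : -(t - (m + c)) ^ 2 / (2 * v) =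
      -(t - m) ^ 2 / (2 * v) + (c * (t - m) - c ^ 2 / 2) / v := by
    field_simp
    ring
  rw [gaussianPDFReal, gaussianPDFReal, hexp, exp_add]
  ring

lemma l2norm_pos {d : ℕ} {δ : Fin d → ℝ} (hδ : δ ≠ 0) : 0 < l2norm δ := by
  obtain ⟨i, hi⟩ := Function.ne_iff.1 hδ
  exact sqrt_pos.2 <| Finset.sum_pos' (fun j _ => sq_nonneg (δ j))
    ⟨i, Finset.mem_univ i, sq_pos_of_ne_zero hi⟩

section GaussianVec

variable {d : ℕ} {σ : ℝ}

instance (m : Fin d → ℝ) : IsProbabilityMeasure (gaussianVec m σ) := by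
  unfold gaussianVec
  infer_instance

@[fun_prop]
lemma measurable_dotp (a : Fin d → ℝ) : Measurable (dotp a) := by
  unfold dotp
  fun_prop

lemma gaussianVec_add_eq_withDensity (hσ : σ ≠ 0) (x δ : Fin d → ℝ) :
    gaussianVec (x + δ) σ = (gaussianVec x σ).withDensity
      fun z => ENNReal.ofReal (exp ((dotp δ (z - x) - dotp δ δ / 2) / σ ^ 2)) := by
  have hv : (σ ^ 2).toNNReal ≠ 0 := by simpa using hσ
  have hvσ : ((σ ^ 2).toNNReal : ℝ) = σ ^ 2 := coe_toNNReal _ (sq_nonneg σ)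
  simp_rw [gaussianVec, Pi.add_apply, gaussianReal_add_eq_withDensity _ _ hv, hvσ]
  rw [Measure.pi_withDensity_ofReal fun i => by fun_prop]
  congr 1
  funext z
  rw [← ENNReal.ofReal_prod_of_nonneg fun i _ => (exp_pos _).le, ← exp_sum, ← Finset.sum_div,
    Finset.sum_sub_distrib, ← Finset.sum_div]
  simp [dotp, sq]

lemma gaussianVec_add_apply_le_of_dotp_le (hσ : σ ≠ 0) {x δ : Fin d → ℝ}
    {s t : Set (Fin d → ℝ)}
    (hst : ∀ a ∈ s, ∀ b ∈ t, dotp δ (a - x) ≤ dotp δ (b - x))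
    (h : gaussianVec x σ s ≤ gaussianVec x σ t) :
    gaussianVec (x + δ) σ s ≤ gaussianVec (x + δ) σ t := by
  rw [gaussianVec_add_eq_withDensity hσ]
  refine withDensity_apply_le_of_forall_le (by fun_prop) (fun a ha b hb => ?_) h
  gcongr
  exact hst a ha b hb

end GaussianVec

lemma lt_of_mem_slab_of_notMem_slab {d : ℕ} {σ : ℝ} {x δ z w : Fin d → ℝ} {a b a' b' : ℝ}
    (ha : a' ≤ a) (hz : z ∈ slab σ x δ a b) (hz' : z ∉ slab σ x δ a' b')
    (hw : w ∈ slab σ x δ a' b') :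
    dotp δ (z - x) / (σ * l2norm δ) < dotp δ (w - x) / (σ * l2norm δ) := by
  have hz_le : (dotp δ (z - x) / (σ * l2norm δ) : EReal) ≤ PhiInvE (1 - b') := by
    by_contra! hlt
    exact hz' ⟨hlt, hz.2.trans (monotone_PhiInvE (by linarith))⟩
  exact EReal.coe_lt_coe_iff.1 (hz_le.trans_lt hw.1)

theorem slab_disjoint_comparison_general
    {d : ℕ} (σ : ℝ) (hσ : 0 < σ)
    (x δ : Fin d → ℝ) (hδ : δ ≠ 0)
    (q1 q2 : ℝ)
    (n : ℕ) (e1 e2 : Fin n → ℝ)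
    (C' : Set (Fin d → ℝ))
    (hC' : C' = slab σ x δ q1 q2 \ ⋃ i, slab σ x δ (e1 i) (e2 i))
    (q1w q2w : ℝ)
    (Cw : Set (Fin d → ℝ))
    (hCwsub : Cw ⊆ slab σ x δ q1w q2w)
    (hdisj : C' ∩ slab σ x δ q1w q2w = ∅)
    (h1 : q1w ≤ q1)
    (hX : gaussianVec x σ C' ≤ gaussianVec x σ Cw) :
    gaussianVec (x + δ) σ C' ≤ gaussianVec (x + δ) σ Cw := by
  refine gaussianVec_add_apply_le_of_dotp_le hσ.ne' (fun a ha b hb => ?_) hX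
  have ha_slab : a ∈ slab σ x δ q1 q2 := (hC' ▸ ha).1
  have ha_w : a ∉ slab σ x δ q1w q2w := fun h =>
    Set.eq_empty_iff_forall_notMem.1 hdisj a ⟨ha, h⟩
  exact ((div_lt_div_iff_of_pos_right (mul_pos hσ (l2norm_pos hδ))).1
    (lt_of_mem_slab_of_notMem_slab h1 ha_slab ha_w (hCwsub hb))).le

/-- Lemma 10 of the paper (comparison with a disjoint region): in the slab
setting, if C_w ⊆ C(q₁ʷ,q₂ʷ) is measurable, C′ ∩ C(q₁ʷ,q₂ʷ) = ∅, q₁ ≥ q₁ʷ,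
q₂ ≥ q₂ʷ, and Pr(X ∈ C′) ≤ Pr(X ∈ C_w), then Pr(Y ∈ C′) ≤ Pr(Y ∈ C_w). -/
theorem slab_disjoint_comparison
    {d : ℕ} (hd : 1 ≤ d) (σ : ℝ) (hσ : 0 < σ)
    (x δ : Fin d → ℝ) (hδ : δ ≠ 0)
    (q1 q2 : ℝ) (hq1 : 0 ≤ q1) (hq12 : q1 < q2) (hq2 : q2 ≤ 1)
    (n : ℕ) (e1 e2 : Fin n → ℝ)
    (he : ∀ i, q1 ≤ e1 i ∧ e1 i ≤ e2 i ∧ e2 i ≤ q2)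
    (C' : Set (Fin d → ℝ))
    (hC' : C' = slab σ x δ q1 q2 \ ⋃ i, slab σ x δ (e1 i) (e2 i))
    (q1w q2w : ℝ) (hw0 : 0 ≤ q1w) (hw : q1w ≤ q2w) (hw1 : q2w ≤ 1)
    (Cw : Set (Fin d → ℝ)) (hCw : MeasurableSet Cw)
    (hCwsub : Cw ⊆ slab σ x δ q1w q2w)
    (hdisj : C' ∩ slab σ x δ q1w q2w = ∅)
    (h1 : q1w ≤ q1) (h2 : q2w ≤ q2)
    (hX : gaussianVec x σ C' ≤ gaussianVec x σ Cw) :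
    gaussianVec (x + δ) σ C' ≤ gaussianVec (x + δ) σ Cw :=
  slab_disjoint_comparison_general σ hσ x δ hδ q1 q2 n e1 e2 C' hC' q1w q2w Cw hCwsub hdisj h1 hX
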